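/- arXiv:2205.09727 — 4 statements merged into one kernel-verified Lean document; each statement's English description precedes it below -/
import Mathlib

section
/- For integers 1 ≤ ℓ ≤ k ≤ n, if k²/(n−k) ≤ 1 then P(Hypergeom(n,k,k) ≥ ℓ) ≤ k · (k²/(n−k))^ℓ. -/
/-!
With `m = n - k` and `r = k² / m`, every term of the tail is at most `r ^ j`. Indeed
`C(m+j,k)·C(k,j) = C(m+j,j)·C(m,k-j)` and `C(m+j,k) ≤ C(m+k,k)` give
`C(m,k-j) / C(m+k,k) ≤ C(k,j) / C(m+j,j)`, and then `C(k,j) ≤ k^j / j!` together with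
`C(m+j,j) ≥ m^j / j!` bound the term by `k^{2j} / m^j`. As `r ≤ 1`, the terms with `j ≥ ℓ` are
at most `r ^ ℓ`, and since `ℓ ≥ 1` there are at most `k` of them.
-/

open scoped ENNReal Nat
theorem Nat.choose_mul_factorial_le_pow (k j : ℕ) : k.choose j * j ! ≤ k ^ j := by
  rw [mul_comm, ← Nat.descFactorial_eq_factorial_mul_choose]
  exact Nat.descFactorial_le_pow k j

theorem Nat.pow_le_factorial_mul_choose_add (m j : ℕ) : m ^ j ≤ j ! * (m + j).choose j := by
  rw [← Nat.descFactorial_eq_factorial_mul_choose]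
  calc m ^ j ≤ (m + j + 1 - j) ^ j := Nat.pow_le_pow_left (by omega) j
    _ ≤ (m + j).descFactorial j := Nat.pow_sub_le_descFactorial _ _

theorem Nat.choose_mul_pow_le (m k j : ℕ) : k.choose j * m ^ j ≤ k ^ j * (m + j).choose j :=
  calc k.choose j * m ^ j ≤ k.choose j * (j ! * (m + j).choose j) :=
        Nat.mul_le_mul_left _ (Nat.pow_le_factorial_mul_choose_add m j)
    _ = k.choose j * j ! * (m + j).choose j := by ring
    _ ≤ k ^ j * (m + j).choose j := Nat.mul_le_mul_right _ (Nat.choose_mul_factorial_le_pow k j)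

theorem Nat.choose_add_mul_choose_le {m k j : ℕ} (hjk : j ≤ k) :
    (m + j).choose j * m.choose (k - j) ≤ k.choose j * (m + k).choose k := by
  have h := Nat.choose_mul (n := m + j) hjk
  rw [Nat.add_sub_cancel] at h
  rw [← h, mul_comm]
  exact Nat.mul_le_mul_left _ (Nat.choose_le_choose k (by omega))

theorem Nat.choose_mul_choose_mul_pow_le {m k j : ℕ} (hjk : j ≤ k) :
    k.choose j * m.choose (k - j) * m ^ j ≤ k ^ (2 * j) * (m + k).choose k := by
  refine Nat.le_of_mul_le_mul_right ?_ (Nat.choose_pos (Nat.le_add_left j m))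
  calc k.choose j * m.choose (k - j) * m ^ j * (m + j).choose j
      = ((m + j).choose j * m.choose (k - j)) * (k.choose j * m ^ j) := by ring
    _ ≤ (k.choose j * (m + k).choose k) * (k ^ j * (m + j).choose j) :=
        Nat.mul_le_mul (Nat.choose_add_mul_choose_le hjk) (Nat.choose_mul_pow_le m k j)
    _ ≤ (k ^ j * (m + k).choose k) * (k ^ j * (m + j).choose j) :=
        Nat.mul_le_mul_right _ (Nat.mul_le_mul_right _ (Nat.choose_le_pow k j))
    _ = k ^ (2 * j) * (m + k).choose k * (m + j).choose j := by ring

theorem hypergeom_term_le {n k j : ℕ} (hjk : j ≤ k) (hkn : k < n) :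
    ((k.choose j : ℝ≥0∞) * ((n - k).choose (k - j) : ℝ≥0∞)) / (n.choose k : ℝ≥0∞)
      ≤ ((k : ℝ≥0∞) ^ 2 / ((n : ℝ≥0∞) - (k : ℝ≥0∞))) ^ j := by
  have hm : ((n - k : ℕ) : ℝ≥0∞) ^ j ≠ 0 :=
    pow_ne_zero _ (by exact_mod_cast (Nat.sub_pos_of_lt hkn).ne')
  rw [← ENNReal.natCast_sub, div_eq_mul_inv (_ ^ 2), mul_pow, ← ENNReal.inv_pow,
    ← div_eq_mul_inv, ← pow_mul,
    ENNReal.div_le_iff (by exact_mod_cast (Nat.choose_pos hkn.le).ne') (ENNReal.natCast_ne_top _),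
    ← ENNReal.mul_div_right_comm, ENNReal.le_div_iff_mul_le (Or.inl hm) (Or.inl (by simp))]
  have := Nat.choose_mul_choose_mul_pow_le (m := n - k) hjk
  rw [Nat.sub_add_cancel hkn.le] at this
  exact_mod_cast this

theorem hypergeom_tail_bound_general (n k ℓ : ℕ) (hℓ : 1 ≤ ℓ)
    (hratio : (k : ℝ≥0∞) ^ 2 / ((n : ℝ≥0∞) - (k : ℝ≥0∞)) ≤ 1) :
    ∑ j ∈ Finset.Icc ℓ k,
        ((Nat.choose k j : ℝ≥0∞) * (Nat.choose (n - k) (k - j) : ℝ≥0∞)) / (Nat.choose n k : ℝ≥0∞)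
      ≤ (k : ℝ≥0∞) * ((k : ℝ≥0∞) ^ 2 / ((n : ℝ≥0∞) - (k : ℝ≥0∞))) ^ ℓ := by
  set r := (k : ℝ≥0∞) ^ 2 / ((n : ℝ≥0∞) - (k : ℝ≥0∞))
  have hk2 : k ^ 2 ≤ n - k := by
    have h := (ENNReal.div_le_iff_le_mul (Or.inr ENNReal.one_ne_top) (Or.inr one_ne_zero)).1 hratio
    rw [one_mul, ← ENNReal.natCast_sub] at h
    exact_mod_cast h
  have hterm : ∀ j ∈ Finset.Icc ℓ k,
      ((k.choose j : ℝ≥0∞) * ((n - k).choose (k - j) : ℝ≥0∞)) / (n.choose k : ℝ≥0∞)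
        ≤ r ^ ℓ := by
    intro j hj
    obtain ⟨hℓj, hjk⟩ := Finset.mem_Icc.1 hj
    have hkn : k < n := by have := Nat.le_self_pow two_ne_zero k; omega
    exact (hypergeom_term_le hjk hkn).trans (pow_le_pow_right_of_le_one' hratio hℓj)
  calc _ ≤ (Finset.Icc ℓ k).card • _ := Finset.sum_le_card_nsmul _ _ _ hterm
    _ ≤ _ := by
      rw [nsmul_eq_mul, Nat.card_Icc]
      gcongr
      exact_mod_cast (by omega : k + 1 - ℓ ≤ k)

/-- For `1 ≤ ℓ ≤ k ≤ n`, if `k²/(n−k) ≤ 1` then the hypergeometric tail satisfies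
`P(Hypergeom(n,k,k) ≥ ℓ) = ∑_{j=ℓ}^{k} C(k,j)·C(n−k,k−j)/C(n,k) ≤ k · (k²/(n−k))^ℓ`
(stated in `ℝ≥0∞`). -/
theorem hypergeom_tail_bound (n k ℓ : ℕ) (hℓ : 1 ≤ ℓ) (hℓk : ℓ ≤ k) (hkn : k ≤ n)
    (hratio : (k : ℝ≥0∞) ^ 2 / ((n : ℝ≥0∞) - (k : ℝ≥0∞)) ≤ 1) :
    ∑ j ∈ Finset.Icc ℓ k,
        ((Nat.choose k j : ℝ≥0∞) * (Nat.choose (n - k) (k - j) : ℝ≥0∞)) / (Nat.choose n k : ℝ≥0∞)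
      ≤ (k : ℝ≥0∞) * ((k : ℝ≥0∞) ^ 2 / ((n : ℝ≥0∞) - (k : ℝ≥0∞))) ^ ℓ :=
  hypergeom_tail_bound_general n k ℓ hℓ hratio
end

section
/- For any 0 ≤ ε < t, letting Φ(t) = P(N(0,1) ≥ t), we have Φ(t−ε)/Φ(t) ≤ 1 + (ε(t²+1)/t)·exp(εt). -/
/-!
Write `φ` for the standard normal density. The function `x ↦ -x/(x²+1) φ(x)` has derivative
`φ(x) (1 - 2/(x²+1)²) ≤ φ(x)`; integrating over `(t, ∞)` gives the Mills-ratio bound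
`Φ(t) ≥ t/(t²+1) φ(t)`. Since `φ` decreases on `[0, ∞)`, `Φ(t-ε) - Φ(t) ≤ ε φ(t-ε)`, and completing
the square gives `φ(t-ε) ≤ e^{εt} φ(t)`. Dividing by `Φ(t)` gives the bound.
-/

open MeasureTheory ProbabilityTheory Real Set Filter Topology

local notation "φ" => gaussianPDFReal 0 1

lemma gaussianPDFReal_zero_one_apply (x : ℝ) : φ x = (√(2 * π))⁻¹ * exp (-x ^ 2 / 2) := by
  simp [gaussianPDFReal]

lemma hasDerivAt_gaussianPDFReal_zero_one (x : ℝ) : HasDerivAt φ (-x * φ x) x := by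
  rw [funext gaussianPDFReal_zero_one_apply]
  exact (((hasDerivAt_pow 2 x).neg.div_const 2).exp.const_mul _).congr_deriv
    (by simp only [Pi.neg_apply]; ring)

lemma gaussianPDFReal_zero_one_antitoneOn : AntitoneOn φ (Ici 0) := by
  intro a ha x _ _
  simp only [gaussianPDFReal_zero_one_apply]
  gcongr

lemma gaussianPDFReal_zero_one_sub_le (x ε : ℝ) : φ (x - ε) ≤ φ x * exp (ε * x) := by
  simp only [gaussianPDFReal_zero_one_apply, mul_assoc, ← exp_add]
  gcongr
  nlinarith [sq_nonneg ε]

lemma tendsto_gaussianPDFReal_zero_one_atTop : Tendsto φ atTop (𝓝 0) := by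
  rw [funext gaussianPDFReal_zero_one_apply, ← mul_zero (√(2 * π))⁻¹]
  refine (tendsto_exp_atBot.comp ?_).const_mul _
  exact (tendsto_neg_atTop_atBot.comp (tendsto_pow_atTop two_ne_zero)).atBot_div_const two_pos

lemma abs_div_sq_add_one_le_one (x : ℝ) : |x / (x ^ 2 + 1)| ≤ 1 := by
  rw [abs_div, abs_of_pos (by positivity : (0 : ℝ) < x ^ 2 + 1), div_le_one (by positivity)]
  nlinarith [abs_nonneg x, sq_abs x]

lemma hasDerivAt_neg_div_sq_add_one_mul_gaussianPDFReal (x : ℝ) :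
    HasDerivAt (fun y => -(y / (y ^ 2 + 1) * φ y)) (φ x * (1 - 2 / (x ^ 2 + 1) ^ 2)) x := by
  have hq : HasDerivAt (fun y : ℝ => y / (y ^ 2 + 1))
      ((1 * (x ^ 2 + 1) - x * (2 * x)) / (x ^ 2 + 1) ^ 2) x :=
    (hasDerivAt_id x).div (by simpa using (hasDerivAt_pow 2 x).add_const 1) (by positivity)
  refine (hq.mul (hasDerivAt_gaussianPDFReal_zero_one x)).neg.congr_deriv ?_
  field_simp
  ring

lemma integrable_gaussianPDFReal_mul_one_sub :
    Integrable fun x => φ x * (1 - 2 / (x ^ 2 + 1) ^ 2) := by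
  refine (integrable_gaussianPDFReal 0 1).mul_bdd (c := 1)
    (Continuous.aestronglyMeasurable (by fun_prop (disch := intro; positivity)))
    (ae_of_all _ fun x => ?_)
  have h : 2 / (x ^ 2 + 1) ^ 2 ≤ 2 := div_le_self two_pos.le (one_le_pow₀ (by nlinarith))
  rw [Real.norm_eq_abs, abs_le]
  constructor <;> nlinarith [div_nonneg two_pos.le (sq_nonneg (x ^ 2 + 1))]

lemma gaussianReal_real_eq_setIntegral (s : Set ℝ) :
    (gaussianReal 0 1).real s = ∫ x in s, φ x := by
  rw [measureReal_def, gaussianReal_apply_eq_integral 0 one_ne_zero]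
  exact ENNReal.toReal_ofReal (setIntegral_nonneg_of_ae (ae_of_all _ (gaussianPDFReal_nonneg 0 1)))

lemma div_sq_add_one_mul_gaussianPDFReal_le_gaussianReal_Ici (t : ℝ) :
    t / (t ^ 2 + 1) * φ t ≤ (gaussianReal 0 1).real (Ici t) := by
  have hlim : Tendsto (fun y => -(y / (y ^ 2 + 1) * φ y)) atTop (𝓝 0) := by
    refine squeeze_zero_norm (fun y => ?_) tendsto_gaussianPDFReal_zero_one_atTop
    rw [norm_neg, norm_mul, Real.norm_of_nonneg (gaussianPDFReal_nonneg 0 1 y)]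
    exact mul_le_of_le_one_left (gaussianPDFReal_nonneg 0 1 y) (abs_div_sq_add_one_le_one y)
  have hftc := integral_Ioi_of_hasDerivAt_of_tendsto' (a := t)
    (fun x _ => hasDerivAt_neg_div_sq_add_one_mul_gaussianPDFReal x)
    integrable_gaussianPDFReal_mul_one_sub.integrableOn hlim
  rw [gaussianReal_real_eq_setIntegral, integral_Ici_eq_integral_Ioi]
  calc t / (t ^ 2 + 1) * φ t = ∫ x in Ioi t, φ x * (1 - 2 / (x ^ 2 + 1) ^ 2) := by
        rw [hftc]; ring
    _ ≤ ∫ x in Ioi t, φ x :=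
        setIntegral_mono_on integrable_gaussianPDFReal_mul_one_sub.integrableOn
          (integrable_gaussianPDFReal 0 1).integrableOn measurableSet_Ioi fun x _ =>
            mul_le_of_le_one_right (gaussianPDFReal_nonneg 0 1 x)
              (sub_le_self 1 (by positivity))

lemma gaussianReal_real_Ico_le {a b : ℝ} (ha : 0 ≤ a) (hab : a ≤ b) :
    (gaussianReal 0 1).real (Ico a b) ≤ (b - a) * φ a := by
  rw [gaussianReal_real_eq_setIntegral]
  calc ∫ x in Ico a b, φ x ≤ ∫ _ in Ico a b, φ a :=
        setIntegral_mono_on (integrable_gaussianPDFReal 0 1).integrableOn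
          (integrableOn_const measure_Ico_lt_top.ne) measurableSet_Ico fun x hx =>
            gaussianPDFReal_zero_one_antitoneOn ha (ha.trans hx.1) hx.1
    _ = (b - a) * φ a := by
        rw [setIntegral_const, Real.volume_real_Ico, max_eq_left (sub_nonneg.mpr hab), smul_eq_mul]

lemma gaussianReal_real_Ici_le_add {a b : ℝ} (ha : 0 ≤ a) (hab : a ≤ b) :
    (gaussianReal 0 1).real (Ici a) ≤ (gaussianReal 0 1).real (Ici b) + (b - a) * φ a := by
  have hdisj : Disjoint (Ico a b) (Ici b) := (Iio_disjoint_Ici le_rfl).mono_left Ico_subset_Iio_self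
  rw [← Ico_union_Ici_eq_Ici hab, measureReal_union hdisj measurableSet_Ici, add_comm]
  gcongr
  exact gaussianReal_real_Ico_le ha hab

/-- Gaussian tail ratio bound: for `0 ≤ ε < t`, with `Φ(t) = P(N(0,1) ≥ t)`,
`Φ(t−ε)/Φ(t) ≤ 1 + (ε(t²+1)/t)·exp(εt)`. -/
theorem gauss_ratio (ε t : ℝ) (hε : 0 ≤ ε) (hεt : ε < t) :
    ((gaussianReal 0 1) (Set.Ici (t - ε))).toReal / ((gaussianReal 0 1) (Set.Ici t)).toReal
      ≤ 1 + (ε * (t ^ 2 + 1) / t) * Real.exp (ε * t) := by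
  have ht : 0 < t := hε.trans_lt hεt
  have hφ : 0 < φ t := gaussianPDFReal_pos 0 1 t one_ne_zero
  have hmills := div_sq_add_one_mul_gaussianPDFReal_le_gaussianReal_Ici t
  have htail : 0 < (gaussianReal 0 1).real (Ici t) := lt_of_lt_of_le (by positivity) hmills
  have hshift : (gaussianReal 0 1).real (Ici (t - ε))
      ≤ (gaussianReal 0 1).real (Ici t) + ε * (φ t * exp (ε * t)) := by
    have h := gaussianReal_real_Ici_le_add (sub_nonneg.mpr hεt.le) (sub_le_self t hε)
    rw [sub_sub_cancel] at h
    exact h.trans (by gcongr; exact gaussianPDFReal_zero_one_sub_le t ε)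
  rw [← measureReal_def, ← measureReal_def, div_le_iff₀ htail]
  calc (gaussianReal 0 1).real (Ici (t - ε))
      ≤ (gaussianReal 0 1).real (Ici t)
          + ε * (t ^ 2 + 1) / t * exp (ε * t) * (t / (t ^ 2 + 1) * φ t) := by
        convert hshift using 2; field_simp
    _ ≤ (1 + ε * (t ^ 2 + 1) / t * exp (ε * t)) * (gaussianReal 0 1).real (Ici t) := by
        rw [add_mul, one_mul]; gcongr
end

section
/- Let ν, c > 0 and let X₁,…,Xₙ be independent real random variables with ∑ᵢ E[Xᵢ²] ≤ ν and ∑ᵢ E|Xᵢ|^q ≤ (q!/2)·ν·c^{q−2} for all integers q ≥ 3. Then for all y > 0, P(∑ᵢ (Xᵢ − E Xᵢ) ≥ √(2νy) + cy) ≤ e^{−y}. -/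
open MeasureTheory ProbabilityTheory Real

/-! Chernoff's method. Since `exp x - x ≤ exp |x| - |x|` and `1 + x ≤ exp x`, the centred
summand `Yᵢ = Xᵢ - E Xᵢ` has `E exp (t Yᵢ) ≤ exp (E exp (t |Xᵢ|) - 1 - t E |Xᵢ|)`, and the exponent
is the series `∑_{q ≥ 2} t^q E |Xᵢ|^q / q!`. Summed over `i`, the moment hypotheses dominate these
series by the geometric series `ν t² / (2 (1 - c t))` for `0 ≤ t < 1 / c`. Independence gives
`P(∑ Yᵢ ≥ ε) ≤ exp (-t ε + ν t² / (2 (1 - c t)))`, and for `ε = √(2 ν y) + c y` the choice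
`t = s / (1 + c s)` with `s = √(2 y / ν)` makes the exponent `-y`. -/

lemma Real.hasSum_pow_mul_pow_div_factorial_exp (t x : ℝ) :
    HasSum (fun q : ℕ => t ^ q * x ^ q / q.factorial) (exp (t * x)) := by
  simpa only [mul_pow, ← exp_eq_exp_ℝ] using NormedSpace.expSeries_div_hasSum_exp (t * x)

lemma Real.exp_sub_le_exp_abs_sub_abs (x : ℝ) : exp x - x ≤ exp |x| - |x| := by
  rcases le_or_gt 0 x with hx | hx
  · rw [abs_of_nonneg hx]
  · have : -x < sinh (-x) := self_lt_sinh_iff.mpr (neg_pos.mpr hx)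
    rw [sinh_eq, neg_neg] at this
    rw [abs_of_neg hx]
    linarith

section Series

variable {α : Type*} [MeasurableSpace α] {μ : Measure α} {F : ℕ → α → ℝ} {f : α → ℝ}

lemma integrable_of_hasSum_of_nonneg (hF0 : ∀ q ω, 0 ≤ F q ω) (hF : ∀ q, Integrable (F q) μ)
    (hsum : Summable fun q => ∫ ω, F q ω ∂μ) (hf : ∀ ω, HasSum (F · ω) (f ω)) :
    Integrable f μ := by
  have hmeas : AEStronglyMeasurable f μ :=
    aestronglyMeasurable_of_tendsto_ae Filter.atTop
      (fun n => Finset.aestronglyMeasurable_sum (Finset.range n) fun q _ => (hF q).1)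
      (ae_of_all _ fun ω => by simpa only [Finset.sum_apply] using (hf ω).tendsto_sum_nat)
  refine ⟨hmeas, ?_⟩
  rw [hasFiniteIntegral_iff_ofReal (ae_of_all _ fun ω => (hf ω).nonneg (hF0 · ω))]
  calc ∫⁻ ω, ENNReal.ofReal (f ω) ∂μ
      = ∫⁻ ω, ∑' q, ENNReal.ofReal (F q ω) ∂μ := by
        congr! 2 with ω
        rw [(hf ω).tsum_eq.symm, ENNReal.ofReal_tsum_of_nonneg (hF0 · ω) (hf ω).summable]
    _ = ∑' q, ENNReal.ofReal (∫ ω, F q ω ∂μ) := by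
        rw [lintegral_tsum (fun q => (hF q).1.aemeasurable.ennreal_ofReal)]
        refine tsum_congr fun q => ?_
        exact (ofReal_integral_eq_lintegral_ofReal (hF q) (ae_of_all _ (hF0 q))).symm
    _ = ENNReal.ofReal (∑' q, ∫ ω, F q ω ∂μ) :=
        (ENNReal.ofReal_tsum_of_nonneg (fun q => integral_nonneg (hF0 q)) hsum).symm
    _ < ⊤ := ENNReal.ofReal_lt_top

lemma hasSum_integral_of_hasSum_of_nonneg (hF0 : ∀ q ω, 0 ≤ F q ω)
    (hF : ∀ q, Integrable (F q) μ) (hsum : Summable fun q => ∫ ω, F q ω ∂μ)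
    (hf : ∀ ω, HasSum (F · ω) (f ω)) :
    HasSum (fun q => ∫ ω, F q ω ∂μ) (∫ ω, f ω ∂μ) := by
  have hnorm : Summable fun q => ∫ ω, ‖F q ω‖ ∂μ := by
    simpa only [Real.norm_of_nonneg (hF0 _ _)] using hsum
  simpa only [(hf _).tsum_eq] using hasSum_integral_of_summable_integral_norm hF hnorm

end Series

section ExpAbs

variable {Ω : Type*} [MeasurableSpace Ω] {μ : Measure Ω} {X : Ω → ℝ} {t : ℝ}

lemma integrable_exp_mul_abs_of_summable (ht : 0 ≤ t)
    (hmom : ∀ q : ℕ, Integrable (fun ω => |X ω| ^ q) μ)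
    (hsum : Summable fun q : ℕ => t ^ q * (∫ ω, |X ω| ^ q ∂μ) / q.factorial) :
    Integrable (fun ω => exp (t * |X ω|)) μ :=
  integrable_of_hasSum_of_nonneg (fun q ω => by positivity)
    (fun q => ((hmom q).const_mul _).div_const _)
    (by simpa only [integral_div, integral_const_mul] using hsum)
    fun ω => Real.hasSum_pow_mul_pow_div_factorial_exp t |X ω|

lemma hasSum_integral_exp_mul_abs (ht : 0 ≤ t)
    (hmom : ∀ q : ℕ, Integrable (fun ω => |X ω| ^ q) μ)
    (hsum : Summable fun q : ℕ => t ^ q * (∫ ω, |X ω| ^ q ∂μ) / q.factorial) :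
    HasSum (fun q : ℕ => t ^ q * (∫ ω, |X ω| ^ q ∂μ) / q.factorial)
      (∫ ω, exp (t * |X ω|) ∂μ) := by
  simpa only [integral_div, integral_const_mul] using
    hasSum_integral_of_hasSum_of_nonneg (fun q ω => by positivity)
      (fun q => ((hmom q).const_mul _).div_const _)
      (by simpa only [integral_div, integral_const_mul] using hsum)
      fun ω => Real.hasSum_pow_mul_pow_div_factorial_exp t |X ω|

lemma hasSum_integral_exp_mul_abs_sub [IsProbabilityMeasure μ] (ht : 0 ≤ t)
    (hmom : ∀ q : ℕ, Integrable (fun ω => |X ω| ^ q) μ)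
    (hsum : Summable fun q : ℕ => t ^ q * (∫ ω, |X ω| ^ q ∂μ) / q.factorial) :
    HasSum (fun q : ℕ => t ^ (q + 2) * (∫ ω, |X ω| ^ (q + 2) ∂μ) / (q + 2).factorial)
      (∫ ω, exp (t * |X ω|) ∂μ - 1 - t * ∫ ω, |X ω| ∂μ) := by
  have h := (hasSum_nat_add_iff' 2).mpr (hasSum_integral_exp_mul_abs ht hmom hsum)
  simpa [Finset.sum_range_succ, sub_sub] using h

lemma integrable_exp_mul_sub_of_integrable_exp_mul_abs (hX : AEStronglyMeasurable X μ)
    (ht : 0 ≤ t) (h : Integrable (fun ω => exp (t * |X ω|)) μ) (a : ℝ) :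
    Integrable (fun ω => exp (t * (X ω - a))) μ := by
  have hmeas : AEStronglyMeasurable (fun ω => exp (t * (X ω - a))) μ :=
    continuous_exp.comp_aestronglyMeasurable ((hX.sub aestronglyMeasurable_const).const_mul t)
  refine (h.mul_const (exp (-(t * a)))).mono' hmeas (ae_of_all _ fun ω => ?_)
  rw [norm_of_nonneg (exp_nonneg _), ← exp_add]
  gcongr
  nlinarith [le_abs_self (X ω)]

lemma mgf_sub_integral_le_exp [IsProbabilityMeasure μ] (ht : 0 ≤ t) (hX : Integrable X μ)
    (h : Integrable (fun ω => exp (t * |X ω|)) μ) :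
    mgf (fun ω => X ω - μ[X]) μ t
      ≤ exp (∫ ω, exp (t * |X ω|) ∂μ - 1 - t * ∫ ω, |X ω| ∂μ) := by
  set K := ∫ ω, exp (t * |X ω|) ∂μ - 1 - t * ∫ ω, |X ω| ∂μ
  have hexpX : Integrable (fun ω => exp (t * X ω)) μ := by
    simpa using integrable_exp_mul_sub_of_integrable_exp_mul_abs hX.1 ht h 0
  have hint : Integrable (fun ω => exp (t * |X ω|) - t * |X ω|) μ := h.sub (hX.abs.const_mul t)
  have hmgf : mgf X μ t ≤ K + 1 + t * μ[X] := by
    calc mgf X μ t ≤ ∫ ω, (exp (t * |X ω|) - t * |X ω| + t * X ω) ∂μ := by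
          refine integral_mono hexpX (hint.add (hX.const_mul t)) fun ω => ?_
          have := exp_sub_le_exp_abs_sub_abs (t * X ω)
          rw [abs_mul, abs_of_nonneg ht] at this
          linarith
      _ = K + 1 + t * μ[X] := by
          rw [integral_add hint (hX.const_mul t),
            integral_sub h (hX.abs.const_mul t), integral_const_mul, integral_const_mul]
          ring
  calc mgf (fun ω => X ω - μ[X]) μ t = mgf X μ t * exp (t * -μ[X]) := by
        simp_rw [sub_eq_add_neg]
        exact mgf_add_const _
    _ ≤ exp (K + t * μ[X]) * exp (t * -μ[X]) := by
        gcongr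
        linarith [add_one_le_exp (K + t * μ[X])]
    _ = exp K := by
        rw [← exp_add]
        ring_nf

end ExpAbs

section MomentSeries

variable {ι : Type*} [Fintype ι] {M : ι → ℕ → ℝ} {ν c t : ℝ}

lemma sum_pow_mul_div_factorial_le_geometric (ht : 0 ≤ t)
    (hM : ∀ q : ℕ, ∑ i, M i (q + 2) ≤ (q + 2).factorial / 2 * ν * c ^ q) (q : ℕ) :
    ∑ i, t ^ (q + 2) * M i (q + 2) / (q + 2).factorial ≤ ν / 2 * t ^ 2 * (t * c) ^ q := by
  rw [← Finset.sum_div, ← Finset.mul_sum]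
  calc (t ^ (q + 2) * ∑ i, M i (q + 2)) / (q + 2).factorial
      ≤ t ^ (q + 2) * ((q + 2).factorial / 2 * ν * c ^ q) / (q + 2).factorial := by
        gcongr
        exact hM q
    _ = ν / 2 * t ^ 2 * (t * c) ^ q := by
        field_simp
        ring

lemma summable_pow_mul_div_factorial (hM0 : ∀ i q, 0 ≤ M i q) (ht : 0 ≤ t) (hc : 0 ≤ c)
    (htc : t * c < 1) (hM : ∀ q : ℕ, ∑ i, M i (q + 2) ≤ (q + 2).factorial / 2 * ν * c ^ q)
    (i : ι) : Summable fun q : ℕ => t ^ q * M i q / q.factorial := by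
  refine (summable_nat_add_iff 2).mp <|
    ((summable_geometric_of_lt_one (by positivity) htc).mul_left (ν / 2 * t ^ 2)).of_nonneg_of_le
      (fun q => by have := hM0 i (q + 2); positivity) fun q => ?_
  refine le_trans ?_ (sum_pow_mul_div_factorial_le_geometric ht hM q)
  exact Finset.single_le_sum (f := fun j => t ^ (q + 2) * M j (q + 2) / (q + 2).factorial)
    (fun j _ => by have := hM0 j (q + 2); positivity) (Finset.mem_univ i)

lemma sum_tsum_pow_mul_div_factorial_le (hM0 : ∀ i q, 0 ≤ M i q) (ht : 0 ≤ t) (hc : 0 ≤ c)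
    (htc : t * c < 1) (hM : ∀ q : ℕ, ∑ i, M i (q + 2) ≤ (q + 2).factorial / 2 * ν * c ^ q) :
    ∑ i, ∑' q : ℕ, t ^ (q + 2) * M i (q + 2) / (q + 2).factorial
      ≤ ν * t ^ 2 / (2 * (1 - t * c)) := by
  have hsum i : Summable fun q : ℕ => t ^ (q + 2) * M i (q + 2) / (q + 2).factorial :=
    (summable_nat_add_iff 2).mpr (summable_pow_mul_div_factorial hM0 ht hc htc hM i)
  have hgeo := (summable_geometric_of_lt_one (by positivity) htc).mul_left (ν / 2 * t ^ 2)
  rw [← Summable.tsum_finsetSum fun i _ => hsum i]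
  calc ∑' q : ℕ, ∑ i, t ^ (q + 2) * M i (q + 2) / (q + 2).factorial
      ≤ ∑' q : ℕ, ν / 2 * t ^ 2 * (t * c) ^ q :=
        Summable.tsum_le_tsum (sum_pow_mul_div_factorial_le_geometric ht hM)
          (summable_sum fun i _ => hsum i) hgeo
    _ = ν * t ^ 2 / (2 * (1 - t * c)) := by
        rw [tsum_mul_left, tsum_geometric_of_lt_one (by positivity) htc]
        field_simp

end MomentSeries

lemma measureReal_sum_ge_le_exp_of_mgf_le {Ω ι : Type*} [MeasurableSpace Ω] {μ : Measure Ω}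
    {Y : ι → Ω → ℝ} {K : ι → ℝ} {s : Finset ι} {t : ℝ} (hindep : iIndepFun Y μ)
    (hmeas : ∀ i, Measurable (Y i)) (ht : 0 ≤ t)
    (hint : ∀ i ∈ s, Integrable (fun ω => exp (t * Y i ω)) μ)
    (hK : ∀ i ∈ s, mgf (Y i) μ t ≤ exp (K i)) (ε : ℝ) :
    μ.real {ω | ε ≤ ∑ i ∈ s, Y i ω} ≤ exp (-t * ε + ∑ i ∈ s, K i) := by
  have := hindep.isProbabilityMeasure
  calc μ.real {ω | ε ≤ ∑ i ∈ s, Y i ω} = μ.real {ω | ε ≤ (∑ i ∈ s, Y i) ω} := by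
        simp only [Finset.sum_apply]
    _ ≤ exp (-t * ε) * mgf (∑ i ∈ s, Y i) μ t :=
        measure_ge_le_exp_mul_mgf ε ht (hindep.integrable_exp_mul_sum hmeas hint)
    _ ≤ exp (-t * ε) * exp (∑ i ∈ s, K i) := by
        rw [hindep.mgf_sum hmeas, exp_sum]
        gcongr with i hi
        · exact fun i _ => mgf_nonneg
        · exact hK i hi
    _ = exp (-t * ε + ∑ i ∈ s, K i) := (exp_add _ _).symm

lemma exists_bernstein_exponent_eq {ν c y : ℝ} (hν : 0 < ν) (hc : 0 ≤ c) (hy : 0 ≤ y) :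
    ∃ t, 0 ≤ t ∧ t * c < 1 ∧
      -t * (√(2 * ν * y) + c * y) + ν * t ^ 2 / (2 * (1 - t * c)) = -y := by
  set s := √(2 * y / ν)
  have hs : 0 ≤ s := sqrt_nonneg _
  have hs2 : s ^ 2 = 2 * y / ν := sq_sqrt (by positivity)
  have hsqrt : √(2 * ν * y) = ν * s := by
    rw [← sqrt_sq (by positivity : 0 ≤ ν * s), mul_pow, hs2]
    field_simp
  have hd : 0 < 1 + c * s := by positivity
  refine ⟨s / (1 + c * s), by positivity, ?_, ?_⟩
  · rw [div_mul_eq_mul_div, div_lt_one hd]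
    linarith
  · have h1 : 1 - s / (1 + c * s) * c = 1 / (1 + c * s) := by
      field_simp
      ring
    rw [h1, hsqrt]
    have hy' : y = ν * s ^ 2 / 2 := by rw [hs2]; field_simp
    rw [hy']
    field_simp
    ring

/-- Bernstein's inequality under moment conditions: if `X₁,…,Xₙ` are independent with
`∑ᵢ E[Xᵢ²] ≤ ν` and `∑ᵢ E|Xᵢ|^q ≤ (q!/2)·ν·c^{q−2}` for all integers `q ≥ 3`, then for all
`y > 0`, `P(∑ᵢ (Xᵢ − E Xᵢ) ≥ √(2νy) + cy) ≤ e^{−y}`. -/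
theorem bernstein_moment {Ω : Type*} [MeasurableSpace Ω] (μ : Measure Ω) [IsProbabilityMeasure μ]
    {n : ℕ} (X : Fin n → Ω → ℝ) (hmeas : ∀ i, Measurable (X i))
    (hindep : iIndepFun X μ)
    (hmom : ∀ (i : Fin n) (q : ℕ), Integrable (fun ω => |X i ω| ^ q) μ)
    (ν c : ℝ) (hν : 0 < ν) (hc : 0 < c)
    (h2 : ∑ i, ∫ ω, (X i ω) ^ 2 ∂μ ≤ ν)
    (hq : ∀ q : ℕ, 3 ≤ q →
      ∑ i, ∫ ω, |X i ω| ^ q ∂μ ≤ ((Nat.factorial q : ℝ) / 2) * ν * c ^ (q - 2))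
    (y : ℝ) (hy : 0 < y) :
    (μ {ω | Real.sqrt (2 * ν * y) + c * y ≤ ∑ i, (X i ω - ∫ ω', X i ω' ∂μ)}).toReal
      ≤ Real.exp (-y) := by
  obtain ⟨t, ht, htc, hexponent⟩ := exists_bernstein_exponent_eq hν hc.le hy.le
  set M : Fin n → ℕ → ℝ := fun i q => ∫ ω, |X i ω| ^ q ∂μ
  have hM0 i q : 0 ≤ M i q := integral_nonneg fun ω => by positivity
  have hM : ∀ q : ℕ, ∑ i, M i (q + 2) ≤ (q + 2).factorial / 2 * ν * c ^ q := by
    rintro (_ | q)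
    · simpa [M, sq_abs] using h2
    · simpa using hq (q + 3) (by omega)
  have hsum := summable_pow_mul_div_factorial hM0 ht hc.le htc hM
  have hexp i := integrable_exp_mul_abs_of_summable ht (hmom i) (hsum i)
  have hint i : Integrable (X i) μ :=
    (integrable_norm_iff (hmeas i).aestronglyMeasurable).mp (by simpa using hmom i 1)
  have hK : ∑ i, (∫ ω, exp (t * |X i ω|) ∂μ - 1 - t * ∫ ω, |X i ω| ∂μ)
      ≤ ν * t ^ 2 / (2 * (1 - t * c)) := by
    simp only [← (hasSum_integral_exp_mul_abs_sub ht (hmom _) (hsum _)).tsum_eq]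
    exact sum_tsum_pow_mul_div_factorial_le hM0 ht hc.le htc hM
  calc (μ {ω | Real.sqrt (2 * ν * y) + c * y ≤ ∑ i, (X i ω - ∫ ω', X i ω' ∂μ)}).toReal
      ≤ exp (-t * (√(2 * ν * y) + c * y)
          + ∑ i, (∫ ω, exp (t * |X i ω|) ∂μ - 1 - t * ∫ ω, |X i ω| ∂μ)) :=
        measureReal_sum_ge_le_exp_of_mgf_le
          (hindep.comp _ fun i => measurable_id.sub_const (∫ ω, X i ω ∂μ))
          (fun i => (hmeas i).sub_const _) ht
          (fun i _ => integrable_exp_mul_sub_of_integrable_exp_mul_abs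
            (hmeas i).aestronglyMeasurable ht (hexp i) _)
          (fun i _ => mgf_sub_integral_le_exp ht (hint i) (hexp i)) _
    _ ≤ exp (-y) := by
        rw [← hexponent]
        gcongr
end

section
/- Let D ≥ 2 be an integer, λ ≥ 0, and let s be a real random variable with all moments finite such that E[s^d] ≥ 0 for all d ≥ 0 and P(|s| ≥ δ) ≥ e^{−D} for some δ ≥ 0, with D even. If C := E[exp^{≤D}(λ̂² s)] with λ̂ > 0, then δ ≤ (D/λ̂²)·(C e D)^{1/D}. -/
/-!
Only the top term of the truncated exponential is needed: since all moments are nonnegative,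
`C ≥ λ̂^{2D} E[s^D] / D!`, and for even `D` Markov's inequality gives
`E[s^D] ≥ δ^D P(|s| ≥ δ) ≥ δ^D e^{-D}`. Hence `(λ̂²δ)^D ≤ C D! e^D ≤ C e D^{D+1}`,
the last step by Stirling's upper bound, and taking `D`-th roots gives the claim.
-/

open MeasureTheory

open Real Nat in
/-- `n! / (√(2n) (n/e)^n)` decreases, so it is at most its value `e/√2` at `n = 1`. -/
theorem factorial_mul_exp_le (n : ℕ) (hn : n ≠ 0) :
    (n ! : ℝ) * exp n ≤ exp 1 * n ^ (n + 1) := by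
  obtain ⟨m, rfl⟩ := Nat.exists_eq_add_one_of_ne_zero hn
  have h : Stirling.stirlingSeq (m + 1) ≤ exp 1 / √2 := by
    simpa using Stirling.stirlingSeq'_antitone (Nat.zero_le m)
  rw [Stirling.stirlingSeq, div_le_div_iff₀ (by positivity) (by positivity),
    Real.sqrt_mul zero_le_two, div_pow] at h
  field_simp at h
  have hsqrt : √((m + 1 : ℕ) : ℝ) ≤ (m + 1 : ℕ) :=
    (Real.sqrt_le_left (by positivity)).2 (le_self_pow₀ (by simp) two_ne_zero)
  calc _ = ((m + 1)! : ℝ) * exp 1 ^ (m + 1) := by rw [Real.exp_one_pow]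
    _ ≤ exp 1 * √((m + 1 : ℕ) : ℝ) * ((m + 1 : ℕ) : ℝ) ^ (m + 1) := h
    _ ≤ exp 1 * ((m + 1 : ℕ) : ℝ) * ((m + 1 : ℕ) : ℝ) ^ (m + 1) := by gcongr
    _ = _ := by ring

/-- The degree-`D` Taylor polynomial of `exp`, written `exp^{≤D}` in the paper. -/
noncomputable def expTrunc (D : ℕ) (x : ℝ) : ℝ :=
  ∑ d ∈ Finset.range (D + 1), x ^ d / (d.factorial : ℝ)

section Moments

variable {Ω : Type*} [MeasurableSpace Ω] {μ : Measure Ω} {s : Ω → ℝ}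

theorem integral_expTrunc_eq (hint : ∀ d : ℕ, Integrable (fun ω => s ω ^ d) μ) (D : ℕ) (L : ℝ) :
    ∫ ω, expTrunc D (L * s ω) ∂μ =
      ∑ d ∈ Finset.range (D + 1), L ^ d / (d.factorial : ℝ) * ∫ ω, s ω ^ d ∂μ := by
  have hterm (d : ℕ) : (fun ω => (L * s ω) ^ d / (d.factorial : ℝ)) =
      fun ω => L ^ d / (d.factorial : ℝ) * s ω ^ d := by
    funext ω; rw [mul_pow]; ring
  unfold expTrunc
  rw [integral_finsetSum _ fun d _ => by rw [hterm d]; exact (hint d).const_mul _]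
  exact Finset.sum_congr rfl fun d _ => by rw [hterm d, integral_const_mul]

theorem moment_le_integral_expTrunc (hint : ∀ d : ℕ, Integrable (fun ω => s ω ^ d) μ)
    (hpos : ∀ d : ℕ, 0 ≤ ∫ ω, s ω ^ d ∂μ) {L : ℝ} (hL : 0 ≤ L) {k D : ℕ} (hk : k ≤ D) :
    L ^ k / (k.factorial : ℝ) * ∫ ω, s ω ^ k ∂μ ≤ ∫ ω, expTrunc D (L * s ω) ∂μ := by
  rw [integral_expTrunc_eq hint]
  exact Finset.single_le_sum (f := fun d => L ^ d / (d.factorial : ℝ) * ∫ ω, s ω ^ d ∂μ)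
    (fun d _ => mul_nonneg (by positivity) (hpos d)) (Finset.mem_range_succ_iff.2 hk)

theorem pow_mul_measureReal_le_integral_pow [IsFiniteMeasure μ] {D : ℕ} (hD : Even D)
    (hint : Integrable (fun ω => s ω ^ D) μ) {δ : ℝ} (hδ : 0 ≤ δ) :
    δ ^ D * μ.real {ω | δ ≤ |s ω|} ≤ ∫ ω, s ω ^ D ∂μ := by
  have hsub : {ω | δ ≤ |s ω|} ⊆ {ω | δ ^ D ≤ s ω ^ D} := fun ω hω => by
    simpa only [Set.mem_ofPred_eq, hD.pow_abs] using pow_le_pow_left₀ hδ hω D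
  calc δ ^ D * μ.real {ω | δ ≤ |s ω|} ≤ δ ^ D * μ.real {ω | δ ^ D ≤ s ω ^ D} := by
        gcongr; exact measure_ne_top μ _
    _ ≤ ∫ ω, s ω ^ D ∂μ :=
        mul_meas_ge_le_integral_of_nonneg (.of_forall fun ω => hD.pow_nonneg _) hint _

theorem pow_mul_measureReal_le_factorial_mul_integral_expTrunc [IsFiniteMeasure μ]
    (hint : ∀ d : ℕ, Integrable (fun ω => s ω ^ d) μ) (hpos : ∀ d : ℕ, 0 ≤ ∫ ω, s ω ^ d ∂μ)
    {D : ℕ} (hD : Even D) {L δ : ℝ} (hL : 0 ≤ L) (hδ : 0 ≤ δ) :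
    (L * δ) ^ D * μ.real {ω | δ ≤ |s ω|} ≤ D.factorial * ∫ ω, expTrunc D (L * s ω) ∂μ := by
  have hfact : (0 : ℝ) < D.factorial := by positivity
  calc (L * δ) ^ D * μ.real {ω | δ ≤ |s ω|}
      = D.factorial * (L ^ D / D.factorial * (δ ^ D * μ.real {ω | δ ≤ |s ω|})) := by
        field_simp; ring
    _ ≤ D.factorial * (L ^ D / D.factorial * ∫ ω, s ω ^ D ∂μ) := by
        gcongr; exact pow_mul_measureReal_le_integral_pow hD (hint D) hδ
    _ ≤ D.factorial * ∫ ω, expTrunc D (L * s ω) ∂μ := by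
        gcongr; exact moment_le_integral_expTrunc hint hpos hL le_rfl

end Moments

theorem le_mul_rpow_inv_of_pow_le {x y a : ℝ} {n : ℕ} (hn : n ≠ 0) (ha : 0 ≤ a) (hy : 0 ≤ y)
    (h : x ^ n ≤ y * a ^ n) : x ≤ a * y ^ (n⁻¹ : ℝ) := by
  refine le_of_pow_le_pow_left₀ hn (by positivity) ?_
  rwa [mul_pow, Real.rpow_inv_natCast_pow hy hn, mul_comm]

theorem overlap_bound_from_ld_general {Ω : Type*} [MeasurableSpace Ω] (μ : Measure Ω)
    [IsProbabilityMeasure μ] (s : Ω → ℝ)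
    (hint : ∀ d : ℕ, Integrable (fun ω => s ω ^ d) μ)
    (hpos : ∀ d : ℕ, 0 ≤ ∫ ω, s ω ^ d ∂μ)
    (D : ℕ) (hD2 : 2 ≤ D) (hDeven : Even D)
    (lam : ℝ) (hlam : 0 < lam) (δ : ℝ) (hδ : 0 ≤ δ)
    (htail : ENNReal.ofReal (Real.exp (-(D : ℝ))) ≤ μ {ω | δ ≤ |s ω|}) :
    δ ≤ ((D : ℝ) / lam ^ 2) *
        ((∫ ω, ∑ d ∈ Finset.range (D + 1), (lam ^ 2 * s ω) ^ d / (Nat.factorial d : ℝ) ∂μ)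
            * Real.exp 1 * (D : ℝ)) ^ ((D : ℝ)⁻¹) := by
  change δ ≤ (D / lam ^ 2) * ((∫ ω, expTrunc D (lam ^ 2 * s ω) ∂μ) * Real.exp 1 * D) ^ (D⁻¹ : ℝ)
  set C := ∫ ω, expTrunc D (lam ^ 2 * s ω) ∂μ
  have hD : D ≠ 0 := by omega
  have htail' : Real.exp (-D) ≤ μ.real {ω | δ ≤ |s ω|} :=
    (ENNReal.ofReal_le_iff_le_toReal (measure_ne_top μ _)).1 htail
  have hC : 0 ≤ C := le_trans (mul_nonneg (by positivity) (hpos 0))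
    (moment_le_integral_expTrunc hint hpos (by positivity) (Nat.zero_le D))
  have hpow : (lam ^ 2 * δ) ^ D ≤ (C * Real.exp 1 * D) * (D : ℝ) ^ D := calc
    (lam ^ 2 * δ) ^ D = (lam ^ 2 * δ) ^ D * Real.exp (-D) * Real.exp D := by
        rw [mul_assoc, ← Real.exp_add, neg_add_cancel, Real.exp_zero, mul_one]
    _ ≤ (lam ^ 2 * δ) ^ D * μ.real {ω | δ ≤ |s ω|} * Real.exp D := by gcongr
    _ ≤ D.factorial * C * Real.exp D := mul_le_mul_of_nonneg_right
        (pow_mul_measureReal_le_factorial_mul_integral_expTrunc hint hpos hDeven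
          (by positivity) hδ) (Real.exp_nonneg _)
    _ = C * (D.factorial * Real.exp D) := by ring
    _ ≤ C * (Real.exp 1 * (D : ℝ) ^ (D + 1)) :=
        mul_le_mul_of_nonneg_left (factorial_mul_exp_le D hD) hC
    _ = (C * Real.exp 1 * D) * (D : ℝ) ^ D := by ring
  have hroot := le_mul_rpow_inv_of_pow_le hD (Nat.cast_nonneg D) (by positivity) hpow
  rw [div_mul_eq_mul_div, le_div_iff₀ (by positivity)]
  linarith

/-- If `s` is a real random variable with all moments finite, `E[s^d] ≥ 0` for all `d`,
and `P(|s| ≥ δ) ≥ e^{−D}` with `D ≥ 2` even, `δ ≥ 0`, `λ̂ > 0`, then with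
`C = E[exp^{≤D}(λ̂² s)]` one has `δ ≤ (D/λ̂²)·(C e D)^{1/D}`. -/
theorem overlap_bound_from_ld {Ω : Type*} [MeasurableSpace Ω] (μ : Measure Ω)
    [IsProbabilityMeasure μ] (s : Ω → ℝ) (hmeas : Measurable s)
    (hint : ∀ d : ℕ, Integrable (fun ω => s ω ^ d) μ)
    (hpos : ∀ d : ℕ, 0 ≤ ∫ ω, s ω ^ d ∂μ)
    (D : ℕ) (hD2 : 2 ≤ D) (hDeven : Even D)
    (lam : ℝ) (hlam : 0 < lam) (δ : ℝ) (hδ : 0 ≤ δ)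
    (htail : ENNReal.ofReal (Real.exp (-(D : ℝ))) ≤ μ {ω | δ ≤ |s ω|}) :
    δ ≤ ((D : ℝ) / lam ^ 2) *
        ((∫ ω, ∑ d ∈ Finset.range (D + 1), (lam ^ 2 * s ω) ^ d / (Nat.factorial d : ℝ) ∂μ)
            * Real.exp 1 * (D : ℝ)) ^ ((D : ℝ)⁻¹) :=
  overlap_bound_from_ld_general μ s hint hpos D hD2 hDeven lam hlam δ hδ htail
end
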